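/- arXiv:1803.01590 — 4 statements merged into one kernel-verified Lean document; each statement's English description precedes it below -/
import Mathlib

section
/- For every positive integer n, the polynomial identity [n+1]_q · Σ_{T ∈ SYT(2×n)} q^{amaj(T)} = [2n choose n]_q holds in ℤ[q]. -/
/-!
Read a tableau as the binary word of length `2n` whose ones mark the entries of its second row.
Column-strictness becomes the ballot condition (no prefix has more ones than zeros) and `amaj`
becomes the major index of the word. Sorting ballot words by their last two letters gives a
three-term recurrence for their major-index generating function, which the q-ballot numbers
`[m choose k] - q [m choose k-1]` satisfy as well, by q-Pascal and the absorption identity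
`[k+1] [m+1 choose k+1] = [m+1] [m choose k]`. For `m = 2n`, `k = n` the identity
`[n+1] [2n choose n-1] = [n] [2n choose n]` together with `[n+1] - q [n] = 1` finishes the proof.
-/

open Polynomial

/-- The q-integer `[n]_q = 1 + q + ⋯ + q^(n-1)` in `ℤ[q]`. -/
noncomputable def qInt (n : ℕ) : Polynomial ℤ := ∑ i ∈ Finset.range n, X ^ i

/-- The Gaussian binomial coefficient `[a choose b]_q` in `ℤ[q]`, defined by the
standard q-Pascal recurrence `[n+1 choose k+1] = [n choose k] + q^(k+1) [n choose k+1]`. -/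
noncomputable def qBinom : ℕ → ℕ → Polynomial ℤ
  | _, 0 => 1
  | 0, _ + 1 => 0
  | n + 1, k + 1 => qBinom n k + X ^ (k + 1) * qBinom n (k + 1)

/-- Amajor index: sum of all `i` such that `i` appears in row 2 and `i+1` appears in row 1. -/
def amaj {n : ℕ} (T : (Fin n → ℕ) × (Fin n → ℕ)) : ℕ :=
  ∑ i ∈ (Finset.image T.2 Finset.univ).filter (fun i => ∃ j, T.1 j = i + 1), i

/-- Standard Young tableaux of shape 2×n: rows and columns strictly increasing,
entry set exactly `{1, …, 2n}` (each value appearing exactly once). -/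
def SYT (n : ℕ) : Set ((Fin n → ℕ) × (Fin n → ℕ)) :=
  {T | StrictMono T.1 ∧ StrictMono T.2 ∧ (∀ i, T.1 i < T.2 i) ∧
    Set.range T.1 ∪ Set.range T.2 = Set.Icc 1 (2 * n)}

open Finset

lemma qInt_add (a b : ℕ) : qInt (a + b) = qInt a + X ^ a * qInt b := by
  simp only [qInt, sum_range_add, pow_add, mul_sum]

lemma qInt_succ' (n : ℕ) : qInt (n + 1) = 1 + X * qInt n := by
  rw [add_comm, qInt_add]
  simp [qInt]

lemma qInt_succ_eq_add {m k : ℕ} (h : k ≤ m) :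
    qInt (m + 1) = qInt (k + 1) + X ^ (k + 1) * qInt (m - k) := by
  rw [← qInt_add]
  congr 1
  omega

lemma qInt_mul_X_sub_one (n : ℕ) : qInt n * (X - 1) = X ^ n - 1 :=
  geom_sum_mul X n

lemma qInt_ne_zero {n : ℕ} (hn : n ≠ 0) : qInt n ≠ 0 := fun h => by
  simpa [qInt, hn] using congrArg (eval 1) h

noncomputable def qFactorial (n : ℕ) : ℤ[X] := ∏ i ∈ range n, qInt (i + 1)

lemma qFactorial_succ (n : ℕ) : qFactorial (n + 1) = qFactorial n * qInt (n + 1) :=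
  prod_range_succ _ n

lemma qFactorial_ne_zero (n : ℕ) : qFactorial n ≠ 0 :=
  prod_ne_zero_iff.2 fun i _ => qInt_ne_zero i.succ_ne_zero

@[simp] lemma qBinom_zero_right (m : ℕ) : qBinom m 0 = 1 := by
  cases m <;> rfl

lemma qBinom_succ_succ (m k : ℕ) :
    qBinom (m + 1) (k + 1) = qBinom m k + X ^ (k + 1) * qBinom m (k + 1) := rfl

lemma qBinom_eq_zero_of_lt {m k : ℕ} (h : m < k) : qBinom m k = 0 := by
  induction m generalizing k with
  | zero =>
    obtain ⟨k, rfl⟩ : ∃ k', k = k' + 1 := ⟨k - 1, by omega⟩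
    rfl
  | succ m ih =>
    obtain ⟨k, rfl⟩ : ∃ k', k = k' + 1 := ⟨k - 1, by omega⟩
    rw [qBinom_succ_succ, ih (by omega), ih (by omega), mul_zero, add_zero]

lemma qBinom_mul_qFactorial_mul_qFactorial {m k : ℕ} (h : k ≤ m) :
    qBinom m k * qFactorial k * qFactorial (m - k) = qFactorial m := by
  induction m generalizing k with
  | zero =>
    obtain rfl : k = 0 := by omega
    simp [qFactorial]
  | succ m ih =>
    rcases k with _ | k
    · simp [qFactorial]
    have hleft := ih (k := k) (by omega)
    have hright : X ^ (k + 1) * qBinom m (k + 1) * qFactorial (k + 1) * qFactorial (m - k)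
        = X ^ (k + 1) * qFactorial m * qInt (m - k) := by
      rcases Nat.lt_or_ge k m with hk | hk
      · rw [show m - k = m - (k + 1) + 1 by omega, qFactorial_succ (m - (k + 1)),
          ← ih (show k + 1 ≤ m from hk)]
        ring
      · rw [qBinom_eq_zero_of_lt (by omega), show m - k = 0 by omega]
        simp [qInt]
    rw [qFactorial_succ k] at hright
    rw [qBinom_succ_succ, Nat.add_sub_add_right, qFactorial_succ m, qFactorial_succ k]
    linear_combination
      qInt (k + 1) * hleft + hright - qFactorial m * qInt_succ_eq_add (Nat.le_of_succ_le_succ h)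

lemma qBinom_succ_right_eq (m k : ℕ) :
    qBinom m (k + 1) * qInt (k + 1) = qBinom m k * qInt (m - k) := by
  rcases Nat.lt_or_ge k m with hk | hk
  · refine mul_left_cancel₀
      (mul_ne_zero (qFactorial_ne_zero k) (qFactorial_ne_zero (m - (k + 1)))) ?_
    have h1 := qBinom_mul_qFactorial_mul_qFactorial (show k + 1 ≤ m from hk)
    have h2 := qBinom_mul_qFactorial_mul_qFactorial hk.le
    rw [show m - k = m - (k + 1) + 1 by omega] at h2 ⊢
    rw [qFactorial_succ] at h1 h2
    linear_combination h1 - h2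
  · rw [qBinom_eq_zero_of_lt (by omega), show m - k = 0 by omega]
    simp [qInt]

lemma succ_mul_qBinom (m k : ℕ) :
    qInt (m + 1) * qBinom m k = qBinom (m + 1) (k + 1) * qInt (k + 1) := by
  rcases Nat.lt_or_ge m k with hk | hk
  · rw [qBinom_eq_zero_of_lt hk, qBinom_eq_zero_of_lt (by omega)]
    ring
  · rw [qBinom_succ_succ]
    linear_combination qBinom m k * qInt_succ_eq_add hk - X ^ (k + 1) * qBinom_succ_right_eq m k

lemma qBinom_symm_half (k : ℕ) : qBinom (2 * k + 1) (k + 1) = qBinom (2 * k + 1) k := by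
  apply mul_right_cancel₀ (qInt_ne_zero k.succ_ne_zero)
  rw [qBinom_succ_right_eq, show 2 * k + 1 - k = k + 1 by omega]

lemma qBinom_add_two (m k : ℕ) :
    qBinom (m + 2) (k + 1)
      = qBinom (m + 1) (k + 1) + qBinom (m + 1) k + (X ^ (m + 1) - 1) * qBinom m k := by
  rw [qBinom_succ_succ, ← qInt_mul_X_sub_one (m + 1)]
  linear_combination
    -(X - 1) * succ_mul_qBinom m k - qBinom (m + 1) (k + 1) * qInt_mul_X_sub_one (k + 1)

noncomputable def qBallot (m : ℕ) : ℕ → ℤ[X]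
  | 0 => 1
  | k + 1 => qBinom m (k + 1) - X * qBinom m k

lemma qBallot_add_two (m k : ℕ) :
    qBallot (m + 2) (k + 1)
      = qBallot (m + 1) (k + 1) + qBallot (m + 1) k + (X ^ (m + 1) - 1) * qBallot m k := by
  rcases k with _ | k
  · have h := qBinom_add_two m 0
    simp only [qBinom_zero_right] at h
    simp only [qBallot, qBinom_zero_right]
    linear_combination h
  · simp only [qBallot]
    linear_combination qBinom_add_two m (k + 1) - X * qBinom_add_two m k

lemma qBallot_succ_succ (m k : ℕ) :
    qBallot (m + 1) (k + 1) = qBallot m k + X ^ (k + 1) * (qBinom m (k + 1) - qBinom m k) := by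
  rcases k with _ | k
  · have h := qBinom_succ_succ m 0
    simp only [qBinom_zero_right] at h
    simp only [qBallot, qBinom_zero_right]
    linear_combination h
  · simp only [qBallot]
    linear_combination qBinom_succ_succ m (k + 1) - X * qBinom_succ_succ m k

lemma qBallot_two_mul_add_two (k : ℕ) : qBallot (2 * k + 2) (k + 1) = qBallot (2 * k + 1) k := by
  rw [qBallot_succ_succ, qBinom_symm_half, sub_self, mul_zero, add_zero]

lemma qInt_succ_mul_qBallot (n : ℕ) : qInt (n + 1) * qBallot (2 * n) n = qBinom (2 * n) n := by
  rcases n with _ | n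
  · simp [qBallot, qInt]
  · have h := qBinom_succ_right_eq (2 * (n + 1)) n
    rw [show 2 * (n + 1) - n = n + 2 by omega] at h
    simp only [qBallot]
    linear_combination X * h + qBinom (2 * (n + 1)) (n + 1) * qInt_succ' (n + 1)

-- A binary word of length `m` is encoded by the set `S ⊆ {1, …, m}` of positions of its ones.
def maj (m : ℕ) (S : Finset ℕ) : ℕ := ∑ i ∈ S with i + 1 ∉ S ∧ i < m, i

lemma maj_succ {m : ℕ} {S : Finset ℕ} (h : m + 1 ∉ S) :
    maj (m + 1) S = maj m S + if m ∈ S then m else 0 := by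
  unfold maj
  split_ifs with hm
  · have hdescents :
        {i ∈ S | i + 1 ∉ S ∧ i < m + 1} = insert m {i ∈ S | i + 1 ∉ S ∧ i < m} := by
      ext i
      simp only [mem_filter, mem_insert]
      constructor
      · rintro ⟨hi, hi1, him⟩
        rcases Nat.lt_succ_iff_lt_or_eq.1 him with him | rfl
        · exact Or.inr ⟨hi, hi1, him⟩
        · exact Or.inl rfl
      · rintro (rfl | ⟨hi, hi1, him⟩)
        · exact ⟨hm, h, Nat.lt_succ_self i⟩
        · exact ⟨hi, hi1, by omega⟩
    rw [hdescents, sum_insert (by simp), add_comm]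
  · rw [add_zero]
    congr 1
    ext i
    simp only [mem_filter]
    constructor
    · rintro ⟨hi, hi1, him⟩
      exact ⟨hi, hi1, lt_of_le_of_ne (Nat.lt_succ_iff.1 him) (by rintro rfl; exact hm hi)⟩
    · rintro ⟨hi, hi1, him⟩
      exact ⟨hi, hi1, by omega⟩

lemma maj_insert_succ (m : ℕ) (S : Finset ℕ) :
    maj (m + 1) (insert (m + 1) S) = maj m S := by
  unfold maj
  congr 1
  ext i
  simp only [mem_filter, mem_insert]
  constructor
  · rintro ⟨rfl | hi, hi1, him⟩
    · omega
    · exact ⟨hi, fun h' => hi1 (Or.inr h'), by omega⟩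
  · rintro ⟨hi, hi1, him⟩
    exact ⟨Or.inr hi, not_or.2 ⟨by omega, hi1⟩, by omega⟩

def IsBallot (S : Finset ℕ) : Prop := ∀ j, 2 * #{i ∈ S | i ≤ j} ≤ j

lemma isBallot_insert_iff {m : ℕ} {S : Finset ℕ} (hS : ∀ i ∈ S, i ≤ m) :
    IsBallot (insert (m + 1) S) ↔ IsBallot S ∧ 2 * (#S + 1) ≤ m + 1 := by
  have hlow : ∀ j ≤ m, {i ∈ insert (m + 1) S | i ≤ j} = {i ∈ S | i ≤ j} :=
    fun j hj => by
    rw [filter_insert, if_neg (by omega)]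
  have hhigh : ∀ j, m < j → {i ∈ insert (m + 1) S | i ≤ j} = insert (m + 1) S := fun j hj =>
    filter_true_of_mem fun i hi => by
      rcases mem_insert.1 hi with rfl | hi
      · omega
      · exact (hS i hi).trans hj.le
  have hcard : #(insert (m + 1) S) = #S + 1 := card_insert_of_notMem fun h => by
    have := hS _ h; omega
  constructor
  · intro hb
    have htop := hb (m + 1)
    rw [hhigh _ (Nat.lt_succ_self m), hcard] at htop
    refine ⟨fun j => ?_, htop⟩
    rcases le_or_gt j m with hj | hj
    · simpa [hlow j hj] using hb j
    · calc 2 * #{i ∈ S | i ≤ j} ≤ 2 * #S := by gcongr; exact filter_subset _ _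
        _ ≤ j := by omega
  · rintro ⟨hb, htop⟩ j
    rcases le_or_gt j m with hj | hj
    · rw [hlow j hj]; exact hb j
    · rw [hhigh j hj, hcard]; omega

open scoped Classical in
noncomputable def ballotWords (m k : ℕ) : Finset (Finset ℕ) :=
  {S ∈ powersetCard k (Icc 1 m) | IsBallot S}

lemma mem_ballotWords {m k : ℕ} {S : Finset ℕ} :
    S ∈ ballotWords m k ↔ S ⊆ Icc 1 m ∧ #S = k ∧ IsBallot S := by
  simp [ballotWords, and_assoc]

lemma notMem_of_mem_ballotWords {m k j : ℕ} {S : Finset ℕ} (hS : S ∈ ballotWords m k)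
    (hj : m < j) : j ∉ S := fun h => by
  have := (mem_Icc.1 ((mem_ballotWords.1 hS).1 h)).2
  omega

lemma ballotWords_zero_right (m : ℕ) : ballotWords m 0 = {∅} := by
  ext S
  rw [mem_ballotWords, mem_singleton, card_eq_zero]
  refine ⟨fun h => h.2.1, ?_⟩
  rintro rfl
  simp [IsBallot]

lemma ballotWords_eq_empty {m k : ℕ} (h : m < 2 * k) : ballotWords m k = ∅ := by
  refine eq_empty_of_forall_notMem fun S hS => ?_
  obtain ⟨hsub, hcard, hb⟩ := mem_ballotWords.1 hS
  have := hb m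
  rw [filter_true_of_mem fun i hi => (mem_Icc.1 (hsub hi)).2, hcard] at this
  omega

lemma sum_ballotWords_succ_succ {M : Type*} [AddCommMonoid M] (f : Finset ℕ → M) {m k : ℕ}
    (h : 2 * (k + 1) ≤ m + 1) :
    ∑ S ∈ ballotWords (m + 1) (k + 1), f S
      = ∑ S ∈ ballotWords m (k + 1), f S + ∑ S ∈ ballotWords m k, f (insert (m + 1) S) := by
  classical
  have hnew : ∀ S ∈ powersetCard k (Icc 1 m), m + 1 ∉ S := fun S hS hm => by
    have := (mem_Icc.1 ((mem_powersetCard.1 hS).1 hm)).2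
    omega
  have hsplit : ballotWords (m + 1) (k + 1)
      = ballotWords m (k + 1) ∪ (ballotWords m k).image (insert (m + 1)) := by
    unfold ballotWords
    rw [← insert_Icc_right_eq_Icc_add_one (by omega), powersetCard_succ_insert (by simp),
      filter_union, filter_image]
    congr 2
    refine filter_congr fun S hS => ?_
    obtain ⟨hsub, hcard⟩ := mem_powersetCard.1 hS
    rw [isBallot_insert_iff fun i hi => (mem_Icc.1 (hsub hi)).2, hcard]
    exact and_iff_left h
  rw [hsplit, sum_union, sum_image]
  · exact fun S hS T hT hST => by
      simpa [erase_insert (hnew S (mem_filter.1 hS).1), erase_insert (hnew T (mem_filter.1 hT).1)]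
        using congrArg (Finset.erase · (m + 1)) hST
  · refine disjoint_left.2 fun S hS hS' => ?_
    obtain ⟨T, -, rfl⟩ := mem_image.1 hS'
    exact notMem_of_mem_ballotWords hS (Nat.lt_succ_self m) (mem_insert_self _ _)

noncomputable def ballotMajGF (m k : ℕ) : ℤ[X] := ∑ S ∈ ballotWords m k, X ^ maj m S

lemma ballotMajGF_zero_right (m : ℕ) : ballotMajGF m 0 = 1 := by
  simp [ballotMajGF, ballotWords_zero_right, maj]

lemma ballotMajGF_add_two {m k : ℕ} (h : 2 * (k + 1) ≤ m + 1) :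
    ballotMajGF (m + 2) (k + 1) = ballotMajGF (m + 1) (k + 1) + ballotMajGF (m + 1) k
      + (X ^ (m + 1) - 1) * ballotMajGF m k := by
  -- the words of length `m + 1` with `k + 1` ones that end in `0`
  set H := ∑ S ∈ ballotWords m (k + 1), (X : ℤ[X]) ^ maj (m + 1) S
  have hG : ballotMajGF (m + 1) (k + 1) = H + ballotMajGF m k := by
    simp only [ballotMajGF, sum_ballotWords_succ_succ _ h, maj_insert_succ, H]
  have hA : ∑ S ∈ ballotWords (m + 1) (k + 1), (X : ℤ[X]) ^ maj (m + 2) S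
      = H + X ^ (m + 1) * ballotMajGF m k := by
    rw [sum_ballotWords_succ_succ _ h, ballotMajGF, mul_sum]
    congr 1 <;> refine sum_congr rfl fun S hS => ?_
    · rw [maj_succ (notMem_of_mem_ballotWords hS (by omega)),
        if_neg (notMem_of_mem_ballotWords hS (by omega)), add_zero]
    · have hfresh : m + 2 ∉ insert (m + 1) S := by
        simp only [mem_insert, not_or]
        exact ⟨by omega, notMem_of_mem_ballotWords hS (by omega)⟩
      rw [maj_succ hfresh, if_pos (mem_insert_self _ _), maj_insert_succ, pow_add, mul_comm]
  rw [ballotMajGF, sum_ballotWords_succ_succ _ (by omega), hA]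
  simp only [maj_insert_succ]
  rw [← ballotMajGF]
  linear_combination -hG

lemma ballotMajGF_two_mul_add_two (k : ℕ) :
    ballotMajGF (2 * k + 2) (k + 1) = ballotMajGF (2 * k + 1) k := by
  rw [ballotMajGF, sum_ballotWords_succ_succ _ (by omega), ballotWords_eq_empty (by omega),
    sum_empty, zero_add]
  simp only [maj_insert_succ]
  rfl

theorem ballotMajGF_eq_qBallot {m k : ℕ} (h : 2 * k ≤ m) : ballotMajGF m k = qBallot m k := by
  induction m using Nat.strong_induction_on generalizing k with
  | _ m ih =>
    rcases k with _ | k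
    · rw [ballotMajGF_zero_right]
      rfl
    obtain ⟨m, rfl⟩ : ∃ m', m = m' + 2 := ⟨m - 2, by omega⟩
    rcases Nat.lt_or_ge (m + 1) (2 * (k + 1)) with hm | hm
    · obtain rfl : m = 2 * k := by omega
      rw [ballotMajGF_two_mul_add_two, ih _ (by omega) (by omega), qBallot_two_mul_add_two]
    · rw [ballotMajGF_add_two hm, ih _ (by omega) hm, ih _ (by omega) (by omega),
        ih _ (by omega) (by omega), qBallot_add_two]

lemma forall_le_iff_card_filter_le {ι α : Type*} [Fintype ι] [LinearOrder ι]
    [LocallyFiniteOrderBot ι] [LinearOrder α] {a b : ι → α} (ha : Monotone a)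
    (hb : Monotone b) :
    (∀ i, a i ≤ b i) ↔ ∀ x, #{i | b i ≤ x} ≤ #{i | a i ≤ x} := by
  refine ⟨fun h x => card_le_card fun i hi => ?_, fun h i => ?_⟩
  · simp only [mem_filter, mem_univ, true_and] at hi ⊢
    exact (h i).trans hi
  by_contra! hlt
  have hIic : Iic i ⊆ ({j | b j ≤ b i} : Finset ι) := fun j hj => by
    simpa using hb (mem_Iic.1 hj)
  have hIio : ({j | a j ≤ b i} : Finset ι) ⊆ Iio i := fun j hj => by
    simp only [mem_filter, mem_univ, true_and] at hj
    exact mem_Iio.2 (lt_of_not_ge fun hij => (hlt.trans_le (ha hij)).not_ge hj)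
  have := (card_le_card hIic).trans ((h (b i)).trans (card_le_card hIio))
  rw [Iic_eq_cons_Iio, card_cons] at this
  omega

lemma card_filter_image_univ_le {ι : Type*} [Fintype ι] {f : ι → ℕ}
    (hf : Function.Injective f) (j : ℕ) : #{x ∈ image f univ | x ≤ j} = #{i | f i ≤ j} := by
  rw [filter_image, card_image_of_injective _ hf]

lemma forall_lt_iff_isBallot {n : ℕ} {a b : Fin n → ℕ} (ha : StrictMono a) (hb : StrictMono b)
    (hdisj : Disjoint (image a univ) (image b univ))
    (hunion : image a univ ∪ image b univ = Icc 1 (2 * n)) :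
    (∀ i, a i < b i) ↔ IsBallot (image b univ) := by
  have hcount : ∀ j, #{i | a i ≤ j} + #{i | b i ≤ j} = min j (2 * n) := fun j => by
    rw [← card_filter_image_univ_le ha.injective, ← card_filter_image_univ_le hb.injective,
      ← card_union_of_disjoint (hdisj.mono (filter_subset _ _) (filter_subset _ _)),
      ← filter_union, hunion,
      show {x ∈ Icc 1 (2 * n) | x ≤ j} = Icc 1 (min j (2 * n)) by
        ext x; simp only [mem_filter, mem_Icc]; omega,
      Nat.card_Icc, Nat.add_sub_cancel]
  have hbound : ∀ j, #{i | b i ≤ j} ≤ n := fun j =>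
    (card_filter_le _ _).trans (card_univ.trans (Fintype.card_fin n)).le
  calc (∀ i, a i < b i) ↔ ∀ i, a i ≤ b i := forall_congr' fun i =>
        ⟨le_of_lt, fun hle => hle.lt_of_ne fun heq => disjoint_left.1 hdisj
          (mem_image_of_mem a (mem_univ i)) (heq ▸ mem_image_of_mem b (mem_univ i))⟩
    _ ↔ ∀ j, #{i | b i ≤ j} ≤ #{i | a i ≤ j} :=
        forall_le_iff_card_filter_le ha.monotone hb.monotone
    _ ↔ IsBallot (image b univ) := by
      simp only [IsBallot, card_filter_image_univ_le hb.injective]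
      exact forall_congr' fun j => by have := hcount j; have := hbound j; omega

section Tableau

variable {n : ℕ} {T : (Fin n → ℕ) × (Fin n → ℕ)}

lemma image_union_image_of_mem_SYT (hT : T ∈ SYT n) :
    image T.1 univ ∪ image T.2 univ = Icc 1 (2 * n) := by
  apply Finset.coe_injective
  rw [coe_union, Fintype.coe_image_univ, Fintype.coe_image_univ, coe_Icc]
  exact hT.2.2.2

lemma disjoint_image_of_mem_SYT (hT : T ∈ SYT n) :
    Disjoint (image T.1 univ) (image T.2 univ) := by
  rw [← card_union_eq_card_add_card, image_union_image_of_mem_SYT hT,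
    card_image_of_injective _ hT.1.injective, card_image_of_injective _ hT.2.1.injective,
    Nat.card_Icc, card_univ, Fintype.card_fin]
  omega

lemma image_fst_eq_sdiff_of_mem_SYT (hT : T ∈ SYT n) :
    image T.1 univ = Icc 1 (2 * n) \ image T.2 univ := by
  rw [← image_union_image_of_mem_SYT hT, union_sdiff_right,
    (disjoint_image_of_mem_SYT hT).sdiff_eq_left]

lemma amaj_eq_maj (hT : T ∈ SYT n) :
    amaj T = maj (2 * n) (image T.2 univ) := by
  unfold amaj maj
  congr 1
  refine filter_congr fun i _ => ?_
  have hrow1 : (∃ j, T.1 j = i + 1) ↔ i + 1 ∈ image T.1 univ := by simp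
  rw [hrow1, image_fst_eq_sdiff_of_mem_SYT hT, mem_sdiff, mem_Icc]
  constructor
  · rintro ⟨⟨-, hle⟩, hnot⟩
    exact ⟨hnot, by omega⟩
  · rintro ⟨hnot, hlt⟩
    exact ⟨⟨by omega, by omega⟩, hnot⟩

end Tableau

lemma bijOn_image_snd_SYT (n : ℕ) :
    Set.BijOn (fun T => image T.2 univ) (SYT n) (ballotWords (2 * n) n) := by
  refine ⟨fun T hT => ?_, fun T hT T' hT' h => ?_, fun S hS => ?_⟩
  · rw [mem_coe, mem_ballotWords, card_image_of_injective _ hT.2.1.injective, card_univ,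
      Fintype.card_fin, ← (forall_lt_iff_isBallot hT.1 hT.2.1 (disjoint_image_of_mem_SYT hT)
        (image_union_image_of_mem_SYT hT))]
    exact ⟨image_union_image_of_mem_SYT hT ▸ subset_union_right, rfl, hT.2.2.1⟩
  · simp only at h
    refine Prod.ext ((hT.1.range_inj hT'.1).1 ?_) ((hT.2.1.range_inj hT'.2.1).1 ?_)
    · rw [← Fintype.coe_image_univ, ← Fintype.coe_image_univ, image_fst_eq_sdiff_of_mem_SYT hT,
        image_fst_eq_sdiff_of_mem_SYT hT', h]
    · rw [← Fintype.coe_image_univ, ← Fintype.coe_image_univ, h]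
  · obtain ⟨hsub, hcard, hballot⟩ := mem_ballotWords.1 hS
    have hcompl : #(Icc 1 (2 * n) \ S) = n := by
      rw [card_sdiff_of_subset hsub, Nat.card_Icc, hcard]
      omega
    set a := (Icc 1 (2 * n) \ S).orderEmbOfFin hcompl
    set b := S.orderEmbOfFin hcard
    have hA : image a univ = Icc 1 (2 * n) \ S := image_orderEmbOfFin_univ _ _
    have hB : image b univ = S := image_orderEmbOfFin_univ _ _
    have hunion : image a univ ∪ image b univ = Icc 1 (2 * n) := by
      rw [hA, hB, sdiff_union_of_subset hsub]
    refine ⟨(a, b), ⟨a.strictMono, b.strictMono, ?_, ?_⟩, hB⟩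
    · rw [forall_lt_iff_isBallot a.strictMono b.strictMono (by rw [hA, hB]; exact sdiff_disjoint)
        hunion, hB]
      exact hballot
    · rw [← Fintype.coe_image_univ, ← Fintype.coe_image_univ, ← coe_union, hunion, coe_Icc]

lemma finsum_SYT_eq_ballotMajGF (n : ℕ) :
    ∑ᶠ T ∈ SYT n, (X : ℤ[X]) ^ amaj T = ballotMajGF (2 * n) n := by
  rw [ballotMajGF, ← finsum_mem_coe_finset]
  exact finsum_mem_eq_of_bijOn _ (bijOn_image_snd_SYT n) fun T hT => by rw [amaj_eq_maj hT]

theorem c2qn_general (n : ℕ) :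
    qInt (n + 1) * ∑ᶠ T ∈ SYT n, (X : Polynomial ℤ) ^ amaj T
      = qBinom (2 * n) n := by
  rw [finsum_SYT_eq_ballotMajGF, ballotMajGF_eq_qBallot le_rfl, qInt_succ_mul_qBallot]

/-- [n+1]_q · Σ_{T ∈ SYT(2×n)} q^amaj(T) = [2n choose n]_q. -/
theorem c2qn (n : ℕ) (hn : 1 ≤ n) :
    qInt (n + 1) * ∑ᶠ T ∈ SYT n, (X : Polynomial ℤ) ^ amaj T
      = qBinom (2 * n) n :=
  c2qn_general n
end

section
/- For every positive integer n and every integer k with 1 ≤ k ≤ n, there is a bijection between the set RInc_k(2×n) \ Inc_k(2×n) of row-increasing tableaux of shape 2×n with k repeated values that have at least one column with two identical entries, and the set Inc_{k−1}(2×n) of increasing tableaux of shape 2×n with k−1 repeated values; in particular |RInc_k(2×n) \ Inc_k(2×n)| = |Inc_{k−1}(2×n)|, and hence |RInc_k(2×n)| = |Inc_k(2×n)| + |Inc_{k−1}(2×n)|. -/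
/-
Deleting the bottom entry of the first column with two equal entries, shifting the rest of the
bottom row one column to the left and appending the new maximum `2n - k + 1` gives an increasing
tableau: the deleted value still occurs in the top row, so the entry set grows by exactly the new
value and one repeated value disappears. The deletion column is recovered from the image as the last
column `l` with `S.2 (l - 1) < S.1 l` (or `l = 0`), because to the right of the first tie the
shifted bottom row still weakly dominates the top row. Reinserting the top entry of that column into
the bottom row and dropping the maximum inverts the map.
-/

/-- Row-increasing tableaux of shape 2×n with entry set `{1, …, 2n−k}`:
rows strictly increasing, columns weakly increasing. -/
def RInc (n k : ℕ) : Set ((Fin n → ℕ) × (Fin n → ℕ)) :=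
  {T | StrictMono T.1 ∧ StrictMono T.2 ∧ (∀ i, T.1 i ≤ T.2 i) ∧
    Set.range T.1 ∪ Set.range T.2 = Set.Icc 1 (2 * n - k)}

/-- Increasing tableaux of shape 2×n with entry set `{1, …, 2n−k}`:
rows and columns strictly increasing. -/
def Inc (n k : ℕ) : Set ((Fin n → ℕ) × (Fin n → ℕ)) :=
  {T | StrictMono T.1 ∧ StrictMono T.2 ∧ (∀ i, T.1 i < T.2 i) ∧
    Set.range T.1 ∪ Set.range T.2 = Set.Icc 1 (2 * n - k)}

open Set

namespace Tableau

section Row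

variable {n : ℕ}

def removeAt (b : Fin n → ℕ) (i : Fin n) (top : ℕ) : Fin n → ℕ := fun j =>
  if j < i then b j else if h : j.1 + 1 < n then b ⟨j.1 + 1, h⟩ else top

def insertAt (c : Fin n → ℕ) (i : Fin n) (x : ℕ) : Fin n → ℕ := fun j =>
  if j < i then c j else if j = i then x else c ⟨j.1 - 1, (Nat.sub_le _ _).trans_lt j.2⟩

theorem insertAt_removeAt (b : Fin n → ℕ) (i : Fin n) (top : ℕ) :
    insertAt (removeAt b i top) i (b i) = b := by
  funext j
  simp only [insertAt, removeAt]
  split_ifs <;> grind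

theorem removeAt_insertAt (c : Fin n → ℕ) (i : Fin n) (x : ℕ) {top : ℕ}
    (hlast : ∀ j : Fin n, j.1 + 1 = n → c j = top) :
    removeAt (insertAt c i x) i top = c := by
  funext j
  simp only [insertAt, removeAt]
  split_ifs <;> grind

theorem insert_range_removeAt (b : Fin n → ℕ) (i : Fin n) (top : ℕ) :
    insert (b i) (range (removeAt b i top)) = insert top (range b) := by
  have hi := i.2
  ext y
  simp only [mem_insert_iff, mem_range]
  constructor
  · rintro (rfl | ⟨j, rfl⟩)
    · exact Or.inr ⟨i, rfl⟩
    · unfold removeAt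
      split_ifs
      · exact Or.inr ⟨j, rfl⟩
      · exact Or.inr ⟨_, rfl⟩
      · exact Or.inl rfl
  · rintro (rfl | ⟨j, rfl⟩)
    · refine Or.inr ⟨⟨n - 1, by omega⟩, ?_⟩
      simp only [removeAt, Fin.lt_def]
      rw [if_neg (by omega), dif_neg (by omega)]
    · rcases lt_trichotomy j i with h | rfl | h
      · exact Or.inr ⟨j, if_pos h⟩
      · exact Or.inl rfl
      · refine Or.inr ⟨⟨j.1 - 1, by omega⟩, ?_⟩
        simp only [removeAt, Fin.lt_def] at h ⊢
        rw [if_neg (by omega), dif_pos (by omega)]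
        exact congrArg b (Fin.ext (by dsimp only; omega))

theorem insert_range_insertAt (c : Fin n → ℕ) (i : Fin n) (x : ℕ) {top : ℕ}
    (hlast : ∀ j : Fin n, j.1 + 1 = n → c j = top) :
    insert top (range (insertAt c i x)) = insert x (range c) := by
  have hx : insertAt c i x i = x := by simp [insertAt]
  have h := insert_range_removeAt (insertAt c i x) i top
  rw [removeAt_insertAt c i x hlast, hx] at h
  exact h.symm

theorem insertAt_lt {c : Fin n → ℕ} (hc : StrictMono c) {top : ℕ}
    (hlast : ∀ j : Fin n, j.1 + 1 = n → c j = top) {i : Fin n} {x : ℕ} (hx : x < top)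
    (j : Fin n) : insertAt c i x j < top := by
  have hlt : ∀ l : Fin n, l.1 + 1 < n → c l < top := fun l hl =>
    hlast ⟨n - 1, by omega⟩ (by dsimp only; omega) ▸ hc (Fin.lt_def.mpr (by dsimp only; omega))
  simp only [insertAt, Fin.lt_def]
  split_ifs
  · exact hlt j (by omega)
  · exact hx
  · exact hlt _ (by dsimp only; omega)

theorem strictMono_removeAt {b : Fin n → ℕ} (hb : StrictMono b) {top : ℕ}
    (htop : ∀ j, b j < top) (i : Fin n) : StrictMono (removeAt b i top) := by
  intro x y hxy
  simp only [removeAt, Fin.lt_def] at hxy ⊢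
  split_ifs <;> first | omega | exact htop _ | exact hb (by simp only [Fin.lt_def]; omega)

theorem strictMono_insertAt {c : Fin n → ℕ} (hc : StrictMono c) {i : Fin n} {x : ℕ}
    (hlo : ∀ j < i, c j < x) (hhi : ∀ j, i ≤ j → x < c j) : StrictMono (insertAt c i x) := by
  intro y z hyz
  simp only [insertAt, Fin.lt_def, Fin.ext_iff] at hyz ⊢
  split_ifs <;> first
    | omega
    | exact hc (by simp only [Fin.lt_def]; omega)
    | exact hlo _ (by simp only [Fin.lt_def]; omega)
    | exact hhi _ (by simp only [Fin.le_def]; omega)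

end Row

variable {n k : ℕ} {T S : (Fin n → ℕ) × (Fin n → ℕ)} {i : Fin n}

def IsFirstTie (T : (Fin n → ℕ) × (Fin n → ℕ)) (i : Fin n) : Prop :=
  T.1 i = T.2 i ∧ ∀ j < i, T.1 j < T.2 j

/-- Vacuous for `l = 0`, which has no previous column. -/
def HasGapAt (S : (Fin n → ℕ) × (Fin n → ℕ)) (l : Fin n) : Prop :=
  ∀ j : Fin n, j.1 + 1 = l.1 → S.2 j < S.1 l

def IsLastGap (S : (Fin n → ℕ) × (Fin n → ℕ)) (i : Fin n) : Prop :=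
  HasGapAt S i ∧ ∀ l, i < l → ¬ HasGapAt S l

theorem IsFirstTie.unique {i' : Fin n} (h : IsFirstTie T i) (h' : IsFirstTie T i') : i = i' := by
  by_contra hne
  rcases lt_or_gt_of_ne hne with hlt | hlt
  · exact (h'.2 i hlt).ne h.1
  · exact (h.2 i' hlt).ne h'.1

theorem IsLastGap.unique {i' : Fin n} (h : IsLastGap S i) (h' : IsLastGap S i') : i = i' := by
  by_contra hne
  rcases lt_or_gt_of_ne hne with hlt | hlt
  · exact h.2 i' hlt h'.1
  · exact h'.2 i hlt h.1

theorem exists_isFirstTie (hT : T ∈ RInc n k \ Inc n k) : ∃ i, IsFirstTie T i := by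
  obtain ⟨⟨ha, hb, hcol, hrange⟩, hnotInc⟩ := hT
  have htie : {j | T.1 j = T.2 j}.Nonempty := by
    by_contra hnone
    exact hnotInc ⟨ha, hb, fun j => (hcol j).lt_of_ne fun h => hnone ⟨j, h⟩, hrange⟩
  obtain ⟨i, hi, hmin⟩ := wellFounded_lt.has_min _ htie
  exact ⟨i, hi, fun j hj => (hcol j).lt_of_ne fun h => hmin j h hj⟩

theorem exists_isLastGap (hn : 0 < n) (S : (Fin n → ℕ) × (Fin n → ℕ)) : ∃ i, IsLastGap S i := by
  have hgap : {l | HasGapAt S l}.Nonempty := ⟨⟨0, hn⟩, fun j hj => absurd hj j.1.succ_ne_zero⟩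
  obtain ⟨i, hi, hmax⟩ := wellFounded_gt.has_min _ hgap
  exact ⟨i, hi, fun l hl hgap => hmax l hgap hl⟩

noncomputable def firstTie (hT : T ∈ RInc n k \ Inc n k) : Fin n :=
  (exists_isFirstTie hT).choose

theorem isFirstTie_firstTie (hT : T ∈ RInc n k \ Inc n k) : IsFirstTie T (firstTie hT) :=
  (exists_isFirstTie hT).choose_spec

noncomputable def lastGap (hn : 0 < n) (S : (Fin n → ℕ) × (Fin n → ℕ)) : Fin n :=
  (exists_isLastGap hn S).choose

theorem isLastGap_lastGap (hn : 0 < n) (S : (Fin n → ℕ) × (Fin n → ℕ)) :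
    IsLastGap S (lastGap hn S) :=
  (exists_isLastGap hn S).choose_spec

theorem IsFirstTie.isLastGap_removeAt (hb : StrictMono T.2) (hcol : ∀ j, T.1 j ≤ T.2 j)
    (hi : IsFirstTie T i) (top : ℕ) : IsLastGap (T.1, removeAt T.2 i top) i := by
  refine ⟨fun j hj => ?_, fun l hil hgap => ?_⟩
  · have hji : j < i := Fin.lt_def.mpr (by omega)
    simp only [removeAt, if_pos hji]
    exact hi.1 ▸ hb hji
  · have hl := l.2
    have hprev := hgap ⟨l.1 - 1, by omega⟩ (by dsimp only; omega)
    simp only [removeAt, Fin.lt_def] at hil hprev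
    rw [if_neg (by omega), dif_pos (by omega),
      show (⟨l.1 - 1 + 1, _⟩ : Fin n) = l from Fin.ext (by dsimp only; omega)] at hprev
    exact (hcol l).not_gt hprev

theorem isFirstTie_insertAt (hcol : ∀ j, S.1 j < S.2 j) (i : Fin n) :
    IsFirstTie (S.1, insertAt S.2 i (S.1 i)) i :=
  ⟨by simp [insertAt], fun j hj => by simpa [insertAt, hj] using hcol j⟩

theorem inc_subset_rinc : Inc n k ⊆ RInc n k :=
  fun _ ⟨ha, hb, hcol, hrange⟩ => ⟨ha, hb, fun j => (hcol j).le, hrange⟩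

theorem rinc_finite (n k : ℕ) : (RInc n k).Finite := by
  refine ((Set.Finite.pi' fun _ => finite_Icc 1 (2 * n - k)).prod
    (Set.Finite.pi' fun _ => finite_Icc 1 (2 * n - k))).subset ?_
  rintro ⟨a, b⟩ ⟨-, -, -, hrange⟩
  exact ⟨fun j => hrange ▸ Or.inl ⟨j, rfl⟩, fun j => hrange ▸ Or.inr ⟨j, rfl⟩⟩

theorem snd_last_eq_of_mem_inc (hS : S ∈ Inc n k) {j : Fin n} (hj : j.1 + 1 = n) :
    S.2 j = 2 * n - k := by
  obtain ⟨-, hc, hcol, hrange⟩ := hS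
  have hmem : ∀ l, S.2 l ∈ Icc 1 (2 * n - k) := fun l => hrange ▸ Or.inr ⟨l, rfl⟩
  have htop : 2 * n - k ∈ range S.1 ∪ range S.2 :=
    hrange ▸ ⟨(hmem j).1.trans (hmem j).2, le_rfl⟩
  refine le_antisymm (hmem j).2 ?_
  rcases htop with ⟨l, hl⟩ | ⟨l, hl⟩
  · exact absurd ((hcol l).trans_le (hmem l).2) (by omega)
  · exact hl ▸ hc.monotone (Fin.le_def.mpr (by have := l.2; omega))

theorem removeAt_mem_inc (hk : k < 2 * n) (hT : T ∈ RInc n (k + 1)) (hi : IsFirstTie T i) :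
    (T.1, removeAt T.2 i (2 * n - k)) ∈ Inc n k := by
  obtain ⟨ha, hb, hcol, hrange⟩ := hT
  have htop : ∀ j, T.2 j < 2 * n - k := fun j =>
    (show T.2 j ∈ Icc 1 (2 * n - (k + 1)) from hrange ▸ Or.inr ⟨j, rfl⟩).2.trans_lt (by omega)
  refine ⟨ha, strictMono_removeAt hb htop i, fun j => ?_, ?_⟩
  · simp only [removeAt]
    split_ifs with hji hnext
    · exact hi.2 j hji
    · exact (hcol j).trans_lt (hb (Fin.lt_def.mpr (by dsimp only; omega)))
    · exact (hcol j).trans_lt (htop j)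
  · calc range T.1 ∪ range (removeAt T.2 i (2 * n - k))
        = range T.1 ∪ insert (T.2 i) (range (removeAt T.2 i (2 * n - k))) := by
          rw [union_insert, ← hi.1, insert_eq_of_mem (mem_union_left _ (mem_range_self i))]
      _ = insert (2 * n - k) (range T.1 ∪ range T.2) := by
          rw [insert_range_removeAt, union_insert]
      _ = Icc 1 (2 * n - k) := by
          rw [hrange, show 2 * n - k = 2 * n - (k + 1) + 1 by omega]
          exact insert_Icc_right_eq_Icc_add_one (by omega)

theorem insertAt_mem_rinc_diff_inc (hS : S ∈ Inc n k) (hi : IsLastGap S i) :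
    (S.1, insertAt S.2 i (S.1 i)) ∈ RInc n (k + 1) \ Inc n (k + 1) := by
  have hlast : ∀ j : Fin n, j.1 + 1 = n → S.2 j = 2 * n - k := fun j => snd_last_eq_of_mem_inc hS
  obtain ⟨ha, hc, hcol, hrange⟩ := hS
  have hbound : ∀ j, S.2 j ≤ 2 * n - k := fun j =>
    (show S.2 j ∈ Icc 1 (2 * n - k) from hrange ▸ Or.inr ⟨j, rfl⟩).2
  refine ⟨⟨ha, strictMono_insertAt hc (fun j hj => ?_) (fun j hj => ?_), fun j => ?_, ?_⟩,
    fun hInc => (hInc.2.2.1 i).ne (isFirstTie_insertAt hcol i).1⟩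
  · rw [Fin.lt_def] at hj
    have hprev := hi.1 ⟨i.1 - 1, by omega⟩ (by dsimp only; omega)
    exact (hc.monotone (Fin.le_def.mpr (by dsimp only; omega))).trans_lt hprev
  · exact (hcol i).trans_le (hc.monotone hj)
  · simp only [insertAt]
    split_ifs with hji hj
    · exact (hcol j).le
    · rw [hj]
    · have hnogap := hi.2 j (lt_of_le_of_ne (not_lt.1 hji) (Ne.symm hj))
      simp only [HasGapAt, not_forall, not_lt] at hnogap
      obtain ⟨p, hp, hle⟩ := hnogap
      rwa [show p = ⟨j.1 - 1, _⟩ from Fin.ext (by dsimp only; omega)] at hle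
  · have hnotin : 2 * n - k ∉ range S.1 ∪ range (insertAt S.2 i (S.1 i)) := by
      rintro (⟨j, hj⟩ | ⟨j, hj⟩)
      · exact (hcol j).not_ge (hj ▸ hbound j)
      · exact (insertAt_lt hc hlast ((hcol i).trans_le (hbound i)) j).ne hj
    calc range S.1 ∪ range (insertAt S.2 i (S.1 i))
        = insert (2 * n - k) (range S.1 ∪ range (insertAt S.2 i (S.1 i))) \ {2 * n - k} :=
          (insert_sdiff_self_of_notMem hnotin).symm
      _ = (range S.1 ∪ range S.2) \ {2 * n - k} := by
          rw [← union_insert, insert_range_insertAt _ _ _ hlast, union_insert,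
            insert_eq_of_mem (mem_union_left _ (mem_range_self i))]
      _ = Icc 1 (2 * n - (k + 1)) := by
          rw [hrange]
          ext x
          simp only [mem_sdiff, mem_Icc, mem_singleton_iff]
          omega

noncomputable def rincDiffEquivInc (hn : 0 < n) (hk : k < 2 * n) :
    (RInc n (k + 1) \ Inc n (k + 1) : Set ((Fin n → ℕ) × (Fin n → ℕ))) ≃ Inc n k where
  toFun T := ⟨(T.1.1, removeAt T.1.2 (firstTie T.2) (2 * n - k)),
    removeAt_mem_inc hk T.2.1 (isFirstTie_firstTie T.2)⟩
  invFun S := ⟨(S.1.1, insertAt S.1.2 (lastGap hn S.1) (S.1.1 (lastGap hn S.1))),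
    insertAt_mem_rinc_diff_inc S.2 (isLastGap_lastGap hn S.1)⟩
  left_inv := by
    rintro ⟨T, hT⟩
    have hi := isFirstTie_firstTie hT
    have hgap := hi.isLastGap_removeAt hT.1.2.1 hT.1.2.2.1 (2 * n - k)
    refine Subtype.ext (Prod.ext rfl ?_)
    dsimp only
    rw [(isLastGap_lastGap _ _).unique hgap, hi.1, insertAt_removeAt]
  right_inv := by
    rintro ⟨S, hS⟩
    have htie := isFirstTie_insertAt hS.2.2.1 (lastGap hn S)
    refine Subtype.ext (Prod.ext rfl ?_)
    dsimp only
    rw [(isFirstTie_firstTie _).unique htie,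
      removeAt_insertAt _ _ _ fun j => snd_last_eq_of_mem_inc hS]

end Tableau

theorem rinc_minus_inc_bij_general (n k : ℕ) (hk1 : 1 ≤ k) (hk : k ≤ n) :
    Nonempty ((RInc n k \ Inc n k : Set ((Fin n → ℕ) × (Fin n → ℕ)))
        ≃ (Inc n (k - 1) : Set ((Fin n → ℕ) × (Fin n → ℕ)))) ∧
    (RInc n k \ Inc n k).ncard = (Inc n (k - 1)).ncard ∧
    (RInc n k).ncard = (Inc n k).ncard + (Inc n (k - 1)).ncard := by
  obtain ⟨k, rfl⟩ : ∃ k', k = k' + 1 := ⟨k - 1, by omega⟩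
  rw [Nat.add_sub_cancel]
  have e := Tableau.rincDiffEquivInc (n := n) (k := k) (by omega) (by omega)
  have hcard : (RInc n (k + 1) \ Inc n (k + 1)).ncard = (Inc n k).ncard := by
    rw [← Nat.card_coe_set_eq, ← Nat.card_coe_set_eq]
    exact Nat.card_congr e
  refine ⟨⟨e⟩, hcard, ?_⟩
  have hsplit := ncard_sdiff_add_ncard_of_subset (Tableau.inc_subset_rinc (n := n) (k := k + 1))
    (Tableau.rinc_finite n (k + 1))
  omega

/-- There is a bijection between RInc_k(2×n) \ Inc_k(2×n) and Inc_{k−1}(2×n);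
in particular the two sets have equal cardinality, and hence
|RInc_k(2×n)| = |Inc_k(2×n)| + |Inc_{k−1}(2×n)|. -/
theorem rinc_minus_inc_bij (n k : ℕ) (hn : 1 ≤ n) (hk1 : 1 ≤ k) (hk : k ≤ n) :
    Nonempty ((RInc n k \ Inc n k : Set ((Fin n → ℕ) × (Fin n → ℕ)))
        ≃ (Inc n (k - 1) : Set ((Fin n → ℕ) × (Fin n → ℕ)))) ∧
    (RInc n k \ Inc n k).ncard = (Inc n (k - 1)).ncard ∧
    (RInc n k).ncard = (Inc n k).ncard + (Inc n (k - 1)).ncard :=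
  rinc_minus_inc_bij_general n k hk1 hk
end

section
/- For all integers n ≥ 1 and 1 ≤ k ≤ n, the binomial coefficient identity (n+1) · C(2n−k, k) · C(2n−2k, n−k) = (n−k+1) · ( C(n−1, k) · C(2n−k, n) + C(n−1, k−1) · C(2n−k+1, n) ) holds; equivalently, the refined large Schröder number r(n,k) = C(2n−k,k)·C(2n−2k,n−k)/(n−k+1) equals the sum s(n,k) + s(n,k−1) of refined small Schröder numbers, where s(n,j) = C(n−1,j)·C(2n−j,n)/(n+1). -/
/-!
Write `n = a + j + 1` and `k = j + 1`, and let `X = C(2n-k, k) C(2n-2k, n-k)`,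
`Y = C(n-1, k) C(2n-k, n)` and `Z = C(n-1, k-1) C(2n-k+1, n)`. Here `X` is the trinomial
coefficient `(2a+j+1)! / (a! a! (j+1)!)`, and comparing factorials gives `n Y = a X` and
`n (a+1) Z = k (2n-k+1) X`. Multiplying the claim `(n+1) X = (a+1) (Y + Z)` by `n` therefore
reduces it to `n (n+1) = a (a+1) + k (2n-k+1)`.
-/

namespace Nat

theorem choose_mul_choose_add (a b c : ℕ) :
    (a + b).choose a * (a + b + c).choose (a + b) = (a + b + c).choose a * (b + c).choose b := by
  rw [mul_comm, choose_mul (le_add_right a b)]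
  simp only [add_assoc, Nat.add_sub_cancel_left]

end Nat

open Nat

section Schroeder

variable (a j : ℕ)

theorem choose_succ_mul_choose_eq :
    (a + j + 1).choose (j + 1) * (2 * a + j + 1).choose (a + j + 1)
      = (2 * a + j + 1).choose (j + 1) * (2 * a).choose a := by
  have h := choose_mul_choose_add (j + 1) a a
  rwa [show j + 1 + a = a + j + 1 by ring, show a + j + 1 + a = 2 * a + j + 1 by ring,
    show a + a = 2 * a by ring] at h

theorem mul_small_schroeder_eq :
    (a + j + 1) * ((a + j).choose (j + 1) * (2 * a + j + 1).choose (a + j + 1))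
      = a * ((2 * a + j + 1).choose (j + 1) * (2 * a).choose a) := by
  have h := choose_mul_succ_eq (a + j) (j + 1)
  rw [show a + j + 1 - (j + 1) = a by omega] at h
  rw [← choose_succ_mul_choose_eq, ← mul_assoc, mul_comm _ ((a + j).choose (j + 1)), h]
  ring

theorem mul_small_schroeder_pred_eq :
    (a + j + 1) * (a + 1) * ((a + j).choose j * (2 * a + j + 2).choose (a + j + 1))
      = (j + 1) * (2 * a + j + 2) * ((2 * a + j + 1).choose (j + 1) * (2 * a).choose a) := by
  have h₁ := add_one_mul_choose_eq (a + j) j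
  have h₂ : (2 * a + j + 2).choose (a + j + 1) * (a + 1)
      = (2 * a + j + 2) * (2 * a + j + 1).choose (a + j + 1) := by
    rw [choose_symm_of_eq_add (show 2 * a + j + 2 = (a + j + 1) + (a + 1) by ring),
      choose_symm_of_eq_add (show 2 * a + j + 1 = (a + j + 1) + a by ring)]
    exact (add_one_mul_choose_eq (2 * a + j + 1) a).symm
  calc (a + j + 1) * (a + 1) * ((a + j).choose j * (2 * a + j + 2).choose (a + j + 1))
      = ((a + j + 1) * (a + j).choose j) * ((2 * a + j + 2).choose (a + j + 1) * (a + 1)) := by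
        ring
    _ = _ := by rw [h₁, h₂, ← choose_succ_mul_choose_eq]; ring

theorem large_schroeder_eq_small_add_small :
    (a + j + 2) * ((2 * a + j + 1).choose (j + 1) * (2 * a).choose a)
      = (a + 1) * ((a + j).choose (j + 1) * (2 * a + j + 1).choose (a + j + 1)
          + (a + j).choose j * (2 * a + j + 2).choose (a + j + 1)) := by
  apply Nat.eq_of_mul_eq_mul_left (show 0 < a + j + 1 by omega)
  calc (a + j + 1) * ((a + j + 2) * ((2 * a + j + 1).choose (j + 1) * (2 * a).choose a))
      = (a + 1) * (a * ((2 * a + j + 1).choose (j + 1) * (2 * a).choose a))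
        + (j + 1) * (2 * a + j + 2) * ((2 * a + j + 1).choose (j + 1) * (2 * a).choose a) := by
        ring
    _ = _ := by rw [← mul_small_schroeder_eq, ← mul_small_schroeder_pred_eq]; ring

end Schroeder

theorem recur_rnk_general (n k : ℕ) (hk1 : 1 ≤ k) (hk : k ≤ n) :
    (n + 1) * (Nat.choose (2 * n - k) k * Nat.choose (2 * n - 2 * k) (n - k))
      = (n - k + 1) * (Nat.choose (n - 1) k * Nat.choose (2 * n - k) n
          + Nat.choose (n - 1) (k - 1) * Nat.choose (2 * n - k + 1) n) := by
  obtain ⟨j, rfl⟩ : ∃ j, k = j + 1 := ⟨k - 1, by omega⟩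
  obtain ⟨a, rfl⟩ : ∃ a, n = a + j + 1 := ⟨n - (j + 1), by omega⟩
  rw [show 2 * (a + j + 1) - (j + 1) = 2 * a + j + 1 by omega,
    show 2 * (a + j + 1) - 2 * (j + 1) = 2 * a by omega,
    show a + j + 1 - (j + 1) = a by omega, show a + j + 1 - 1 = a + j by omega,
    show j + 1 - 1 = j by omega]
  exact large_schroeder_eq_small_add_small a j

/-- (n+1) · C(2n−k, k) · C(2n−2k, n−k)
      = (n−k+1) · ( C(n−1, k) · C(2n−k, n) + C(n−1, k−1) · C(2n−k+1, n) ),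
i.e. the refined large Schröder number r(n,k) equals s(n,k) + s(n,k−1). -/
theorem recur_rnk (n k : ℕ) (hn : 1 ≤ n) (hk1 : 1 ≤ k) (hk : k ≤ n) :
    (n + 1) * (Nat.choose (2 * n - k) k * Nat.choose (2 * n - 2 * k) (n - k))
      = (n - k + 1) * (Nat.choose (n - 1) k * Nat.choose (2 * n - k) n
          + Nat.choose (n - 1) (k - 1) * Nat.choose (2 * n - k + 1) n) :=
  recur_rnk_general n k hk1 hk
end

section
/- For every positive integer n and every integer k with 0 ≤ k ≤ n, there is a bijection between RInc_k(2×n) and the set of Schröder words of length 2n−k with exactly k letters equal to 1, n−k letters equal to 0 and n−k letters equal to 2, such that every prefix contains at least as many 0's as 2's: namely, the map θ sending T to the word w = w_1 ⋯ w_{2n−k} where w_i = 0 if i appears only in row 1 of T, w_i = 2 if i appears only in row 2 of T, and w_i = 1 if i appears in both rows of T. In particular the two sets have the same cardinality. -/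
/-- Schröder words of length 2n−k over {0,1,2} (encoded as `Fin 3`), with k letters 1,
n−k letters 0, n−k letters 2, and every prefix having at least as many 0's as 2's. -/
def SchroederWords (n k : ℕ) : Set (Fin (2 * n - k) → Fin 3) :=
  {w | (Finset.univ.filter (fun i : Fin (2 * n - k) => w i = 1)).card = k ∧
       (Finset.univ.filter (fun i : Fin (2 * n - k) => w i = 0)).card = n - k ∧
       (Finset.univ.filter (fun i : Fin (2 * n - k) => w i = 2)).card = n - k ∧
       ∀ j : ℕ, (Finset.univ.filter (fun i : Fin (2 * n - k) => (i : ℕ) < j ∧ w i = 2)).card ≤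
                (Finset.univ.filter (fun i : Fin (2 * n - k) => (i : ℕ) < j ∧ w i = 0)).card}

/-- The reading map θ: position i (1-indexed value i+1 for `i : Fin (2n−k)`) is sent to
1 if the value appears in both rows, 0 if only in row 1, and 2 otherwise. -/
def theta (n k : ℕ) (T : (Fin n → ℕ) × (Fin n → ℕ)) : Fin (2 * n - k) → Fin 3 :=
  fun i =>
    if (∃ j, T.1 j = (i : ℕ) + 1) ∧ (∃ j, T.2 j = (i : ℕ) + 1) then 1
    else if ∃ j, T.1 j = (i : ℕ) + 1 then 0
    else 2

/-!
A tableau is determined by its two rows, i.e. by the sets `A` and `B` of entries of row 1 and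
row 2, and `θ T` records for each value whether it lies in `A \ B`, `A ∩ B` or `B \ A`; so
`A = {w ≠ 2}` and `B = {w ≠ 0}` recover `T` from `w = θ T`. Under this dictionary `#A = #B = n`
becomes the letter counts, and the column condition `a i ≤ b i` on the increasing enumerations
of `A` and `B` is equivalent to `#{b ≤ j} ≤ #{a ≤ j}` for all `j`, which is the prefix condition.
-/

open Finset

section Counting

variable {ι : Type*} (s : Finset ι) (w : ι → Fin 3)

lemma card_filter_ne_two :
    #{i ∈ s | w i ≠ 2} = #{i ∈ s | w i = 0} + #{i ∈ s | w i = 1} := by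
  classical
  rw [← card_union_of_disjoint (disjoint_filter.2 fun i _ h0 h1 => by simp [h0] at h1),
    ← filter_or]
  exact congrArg card (filter_congr fun i _ => by generalize w i = x; fin_cases x <;> simp)

lemma card_filter_ne_zero :
    #{i ∈ s | w i ≠ 0} = #{i ∈ s | w i = 1} + #{i ∈ s | w i = 2} := by
  classical
  rw [← card_union_of_disjoint (disjoint_filter.2 fun i _ h1 h2 => by simp [h1] at h2),
    ← filter_or]
  exact congrArg card (filter_congr fun i _ => by generalize w i = x; fin_cases x <;> simp)

lemma card_eq_card_filter_eq_zero_add_one_add_two :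
    #s = #{i ∈ s | w i = 0} + #{i ∈ s | w i = 1} + #{i ∈ s | w i = 2} := by
  classical
  rw [card_eq_sum_card_fiberwise (f := w) (t := univ) fun _ _ => mem_coe.2 (mem_univ _),
    Fin.sum_univ_three]

end Counting

lemma StrictMono.le_iff_forall_card_filter_le {α : Type*} [LinearOrder α] {n : ℕ}
    {a b : Fin n → α} (ha : StrictMono a) (hb : StrictMono b) :
    a ≤ b ↔ ∀ x, #{l | b l ≤ x} ≤ #{l | a l ≤ x} := by
  refine ⟨fun hab x => card_le_card fun l hl => ?_, fun h i => ?_⟩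
  · simp only [mem_filter, mem_univ, true_and] at hl ⊢
    exact (hab l).trans hl
  · by_contra! hlt
    -- at `x = b i`, at least `i + 1` entries of `b` but at most `i` entries of `a` are `≤ x`
    have hb_ge : (i : ℕ) + 1 ≤ #{l | b l ≤ b i} := by
      rw [← Fin.card_Iic]
      exact card_le_card fun l hl => by simpa using hb.monotone (mem_Iic.1 hl)
    have ha_le : #{l | a l ≤ b i} ≤ i := by
      rw [← Fin.card_Iio]
      exact card_le_card fun l hl => by
        simpa using ha.lt_iff_lt.1 ((mem_filter.1 hl).2.trans_lt hlt)
    have := h (b i)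
    omega

section Rows

variable {n N : ℕ}

lemma card_filter_lt_exists_eq_add_one {f : Fin n → ℕ} (hf : Function.Injective f)
    (hrange : ∀ l, f l ∈ Set.Icc 1 N) (m : ℕ) :
    #{i : Fin N | (i : ℕ) < m ∧ ∃ l, f l = i + 1} = #{l | f l ≤ m} := by
  have hpos l : 1 ≤ f l ∧ f l ≤ N := hrange l
  symm
  refine card_bij (fun l _ => ⟨f l - 1, by have := hpos l; omega⟩) (fun l hl => ?_)
    (fun l _ l' _ h => hf ?_) (fun i hi => ?_)
  · simp only [mem_filter, mem_univ, true_and] at hl ⊢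
    exact ⟨by have := hpos l; omega, l, by have := hpos l; omega⟩
  · have := hpos l; have := hpos l'; simp only [Fin.mk.injEq] at h; omega
  · obtain ⟨hm, l, hl⟩ := (mem_filter.1 hi).2
    exact ⟨l, by simp only [mem_filter, mem_univ, true_and]; omega, Fin.ext (by simp; omega)⟩

lemma card_exists_eq_add_one {f : Fin n → ℕ} (hf : Function.Injective f)
    (hrange : ∀ l, f l ∈ Set.Icc 1 N) :
    #{i : Fin N | ∃ l, f l = i + 1} = n := by
  have := card_filter_lt_exists_eq_add_one hf hrange N
  simp only [Fin.is_lt, true_and] at this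
  rw [this, filter_true_of_mem fun l _ => (hrange l).2, card_univ, Fintype.card_fin]

lemma range_subset_range_of_exists_eq_add_one {f g : Fin n → ℕ}
    (hf : ∀ l, f l ∈ Set.Icc 1 N)
    (h : ∀ i : Fin N, (∃ l, f l = i + 1) → ∃ l, g l = i + 1) :
    Set.range f ⊆ Set.range g := by
  rintro _ ⟨l, rfl⟩
  have hl : 1 ≤ f l ∧ f l ≤ N := hf l
  obtain ⟨l', hl'⟩ := h ⟨f l - 1, by omega⟩ ⟨l, by simp; omega⟩
  exact ⟨l', by simp at hl'; omega⟩

lemma range_eq_range_of_exists_eq_add_one_iff {f g : Fin n → ℕ}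
    (hf : ∀ l, f l ∈ Set.Icc 1 N) (hg : ∀ l, g l ∈ Set.Icc 1 N)
    (h : ∀ i : Fin N, (∃ l, f l = i + 1) ↔ ∃ l, g l = i + 1) :
    Set.range f = Set.range g :=
  (range_subset_range_of_exists_eq_add_one hf fun i => (h i).1).antisymm
    (range_subset_range_of_exists_eq_add_one hg fun i => (h i).2)

lemma range_union_range_eq_Icc_iff {f g : Fin n → ℕ} :
    Set.range f ∪ Set.range g = Set.Icc 1 N ↔
      (∀ l, f l ∈ Set.Icc 1 N) ∧ (∀ l, g l ∈ Set.Icc 1 N) ∧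
        ∀ i : Fin N, (∃ l, f l = i + 1) ∨ (∃ l, g l = i + 1) := by
  constructor
  · intro h
    refine ⟨fun l => h ▸ Or.inl ⟨l, rfl⟩, fun l => h ▸ Or.inr ⟨l, rfl⟩, fun i => ?_⟩
    exact (h ▸ ⟨by omega, i.is_lt⟩ : (i : ℕ) + 1 ∈ Set.range f ∪ Set.range g)
  · rintro ⟨hf, hg, hcover⟩
    refine (Set.union_subset (Set.range_subset_iff.2 hf) (Set.range_subset_iff.2 hg)).antisymm
      fun v ⟨h1, h2⟩ => ?_
    obtain ⟨l, hl⟩ | ⟨l, hl⟩ := hcover ⟨v - 1, by omega⟩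
    · exact Or.inl ⟨l, by simp at hl; omega⟩
    · exact Or.inr ⟨l, by simp at hl; omega⟩

def rowOfFinset (P : Finset (Fin N)) (h : #P = n) : Fin n → ℕ :=
  fun l => (P.orderEmbOfFin h l : ℕ) + 1

variable (P : Finset (Fin N)) (h : #P = n)

lemma rowOfFinset_strictMono : StrictMono (rowOfFinset P h) :=
  fun _ _ hab => Nat.succ_lt_succ ((P.orderEmbOfFin h).strictMono hab)

lemma rowOfFinset_mem_Icc (l : Fin n) : rowOfFinset P h l ∈ Set.Icc 1 N :=
  ⟨by simp [rowOfFinset], (P.orderEmbOfFin h l).is_lt⟩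

lemma exists_rowOfFinset_eq_add_one_iff (i : Fin N) :
    (∃ l, rowOfFinset P h l = i + 1) ↔ i ∈ P := by
  simp only [rowOfFinset, Nat.add_right_cancel_iff, ← Fin.ext_iff]
  rw [← Set.mem_range, range_orderEmbOfFin, mem_coe]

end Rows

section Theta

variable {n k : ℕ}

lemma theta_apply_eq_iff {T : (Fin n → ℕ) × (Fin n → ℕ)} {i : Fin (2 * n - k)}
    (hcover : (∃ l, T.1 l = i + 1) ∨ (∃ l, T.2 l = i + 1)) (x : Fin 3) :
    theta n k T i = x ↔ ((∃ l, T.1 l = i + 1) ↔ x ≠ 2) ∧ ((∃ l, T.2 l = i + 1) ↔ x ≠ 0) := by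
  unfold theta
  fin_cases x <;> split_ifs <;> simp_all

lemma exists_eq_add_one_iff_theta_ne {T : (Fin n → ℕ) × (Fin n → ℕ)} (hT : T ∈ RInc n k)
    (i : Fin (2 * n - k)) :
    ((∃ l, T.1 l = i + 1) ↔ theta n k T i ≠ 2) ∧ ((∃ l, T.2 l = i + 1) ↔ theta n k T i ≠ 0) :=
  (theta_apply_eq_iff ((range_union_range_eq_Icc_iff.1 hT.2.2.2).2.2 i) _).1 rfl

lemma mem_SchroederWords_iff (hk : k ≤ n) (w : Fin (2 * n - k) → Fin 3) :
    w ∈ SchroederWords n k ↔ #{i | w i ≠ 2} = n ∧ #{i | w i ≠ 0} = n ∧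
      ∀ j : ℕ, #{i : Fin (2 * n - k) | (i : ℕ) < j ∧ w i ≠ 0} ≤
        #{i : Fin (2 * n - k) | (i : ℕ) < j ∧ w i ≠ 2} := by
  have hlen := card_eq_card_filter_eq_zero_add_one_add_two univ w
  rw [card_univ, Fintype.card_fin] at hlen
  have hprefix j : #{i : Fin (2 * n - k) | (i : ℕ) < j ∧ w i = 2} ≤
        #{i : Fin (2 * n - k) | (i : ℕ) < j ∧ w i = 0} ↔
      #{i : Fin (2 * n - k) | (i : ℕ) < j ∧ w i ≠ 0} ≤
        #{i : Fin (2 * n - k) | (i : ℕ) < j ∧ w i ≠ 2} := by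
    have h0 := card_filter_ne_zero {i : Fin (2 * n - k) | (i : ℕ) < j} w
    have h2 := card_filter_ne_two {i : Fin (2 * n - k) | (i : ℕ) < j} w
    simp only [filter_filter] at h0 h2
    omega
  simp only [SchroederWords, Set.mem_ofPred_eq, hprefix, card_filter_ne_zero,
    card_filter_ne_two]
  constructor
  · rintro ⟨h1, h0, h2, hpre⟩
    exact ⟨by omega, by omega, hpre⟩
  · rintro ⟨h01, h12, hpre⟩
    exact ⟨by omega, by omega, by omega, hpre⟩

lemma theta_mapsTo (hk : k ≤ n) : Set.MapsTo (theta n k) (RInc n k) (SchroederWords n k) := by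
  intro T hT
  obtain ⟨hb1, hb2, -⟩ := range_union_range_eq_Icc_iff.1 hT.2.2.2
  have hrow1 i : theta n k T i ≠ 2 ↔ ∃ l, T.1 l = i + 1 :=
    (exists_eq_add_one_iff_theta_ne hT i).1.symm
  have hrow2 i : theta n k T i ≠ 0 ↔ ∃ l, T.2 l = i + 1 :=
    (exists_eq_add_one_iff_theta_ne hT i).2.symm
  rw [mem_SchroederWords_iff hk]
  simp only [hrow1, hrow2]
  refine ⟨card_exists_eq_add_one hT.1.injective hb1, card_exists_eq_add_one hT.2.1.injective hb2,
    fun j => ?_⟩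
  rw [card_filter_lt_exists_eq_add_one hT.1.injective hb1,
    card_filter_lt_exists_eq_add_one hT.2.1.injective hb2]
  exact (hT.1.le_iff_forall_card_filter_le hT.2.1).1 hT.2.2.1 j

lemma theta_injOn : Set.InjOn (theta n k) (RInc n k) := by
  intro T hT T' hT' heq
  have hrow i := exists_eq_add_one_iff_theta_ne hT i
  have hrow' i := exists_eq_add_one_iff_theta_ne hT' i
  rw [heq] at hrow
  obtain ⟨hb1, hb2, -⟩ := range_union_range_eq_Icc_iff.1 hT.2.2.2
  obtain ⟨hb1', hb2', -⟩ := range_union_range_eq_Icc_iff.1 hT'.2.2.2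
  have hrange1 : Set.range T.1 = Set.range T'.1 :=
    range_eq_range_of_exists_eq_add_one_iff hb1 hb1' fun i => (hrow i).1.trans (hrow' i).1.symm
  have hrange2 : Set.range T.2 = Set.range T'.2 :=
    range_eq_range_of_exists_eq_add_one_iff hb2 hb2' fun i => (hrow i).2.trans (hrow' i).2.symm
  exact Prod.ext ((hT.1.range_inj hT'.1).1 hrange1) ((hT.2.1.range_inj hT'.2.1).1 hrange2)

lemma theta_surjOn (hk : k ≤ n) : Set.SurjOn (theta n k) (RInc n k) (SchroederWords n k) := by
  intro w hw
  obtain ⟨hP, hQ, hprefix⟩ := (mem_SchroederWords_iff hk w).1 hw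
  set a := rowOfFinset _ hP
  set b := rowOfFinset _ hQ
  have ha (i : Fin (2 * n - k)) : (∃ l, a l = i + 1) ↔ w i ≠ 2 := by
    simpa using exists_rowOfFinset_eq_add_one_iff _ hP i
  have hb (i : Fin (2 * n - k)) : (∃ l, b l = i + 1) ↔ w i ≠ 0 := by
    simpa using exists_rowOfFinset_eq_add_one_iff _ hQ i
  have hcover (i : Fin (2 * n - k)) : (∃ l, a l = i + 1) ∨ (∃ l, b l = i + 1) := by
    rw [ha, hb]
    generalize w i = x
    fin_cases x <;> simp
  refine ⟨(a, b), ⟨rowOfFinset_strictMono _ hP, rowOfFinset_strictMono _ hQ, ?_, ?_⟩, ?_⟩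
  · show a ≤ b
    rw [(rowOfFinset_strictMono _ hP).le_iff_forall_card_filter_le (rowOfFinset_strictMono _ hQ)]
    intro j
    rw [← card_filter_lt_exists_eq_add_one (rowOfFinset_strictMono _ hP).injective
        (rowOfFinset_mem_Icc _ hP),
      ← card_filter_lt_exists_eq_add_one (rowOfFinset_strictMono _ hQ).injective
        (rowOfFinset_mem_Icc _ hQ)]
    simpa only [exists_rowOfFinset_eq_add_one_iff, mem_filter, mem_univ, true_and]
      using hprefix j
  · exact range_union_range_eq_Icc_iff.2
      ⟨rowOfFinset_mem_Icc _ hP, rowOfFinset_mem_Icc _ hQ, hcover⟩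
  · funext i
    exact (theta_apply_eq_iff (hcover i) (w i)).2 ⟨ha i, hb i⟩

end Theta

theorem theta_bijection_general (n k : ℕ) (hk : k ≤ n) :
    Set.BijOn (theta n k) (RInc n k) (SchroederWords n k) ∧
    (RInc n k).ncard = (SchroederWords n k).ncard := by
  have hbij : Set.BijOn (theta n k) (RInc n k) (SchroederWords n k) :=
    ⟨theta_mapsTo hk, theta_injOn, theta_surjOn hk⟩
  exact ⟨hbij, by rw [← hbij.image_eq, hbij.injOn.ncard_image]⟩

/-- θ is a bijection from RInc_k(2×n) onto the set of Schröder words of length 2n−k with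
k 1's, n−k 0's, n−k 2's and the prefix condition; in particular the cardinalities agree. -/
theorem theta_bijection (n k : ℕ) (hn : 1 ≤ n) (hk : k ≤ n) :
    Set.BijOn (theta n k) (RInc n k) (SchroederWords n k) ∧
    (RInc n k).ncard = (SchroederWords n k).ncard :=
  theta_bijection_general n k hk
end
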